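/- Fix Δ > 0 and S > 0. For each parameter vector (θ, η, φ, γ) with θ, η, φ > 0, γ ∈ [0,1), p := η − φ(1+γ²) > 0 and q := 2p − φ²(1 + 6γ² + γ⁴)S > 0, define μ := θΔ/p, E := (1 − e^{−Δp})(e^{Δp} − 1), Γ := 6(θ²/p²)(2η/φ − (1+γ²))(2/q − 1/p)(Δ − (1 − e^{−Δp})/p) + 2(θ²/φ²)(2/q − 1/p)(1 + 6γ² + γ⁴)⁻¹Δ + 2(θ²/p²)Δ², and k := (θ²/(Γp³))(2η/φ − (1+γ²))(2/q − 1/p)E. Then the map (θ, η, φ, γ) ↦ (μ, Γ, p, k) is injective on this parameter set; in particular, from (μ, Γ, p, k) the parameters are uniquely recovered via θ = pμ/Δ, γ = √(γ̃ − 1), φ = −p/γ̃ + √(p²/γ̃² + 2ΔkΓp³/(γ̃M₁E(γ̃² + 4γ̃ − 4))) and η = p + φγ̃, where γ̃ = 1 + γ² is the unique admissible solution of the identification equation of Theorem 5 and M₁ := Γ − (6kΓ/E)(pΔ − 1 + e^{−Δp}) − 2μ². -/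

import Mathlib

/-- The theoretical moment map of the GJR-COGARCH: to a parameter vector
`v = (θ, η, φ, γ)` it associates `(μ, Γ, p, k)`, the mean `μ = E[Gᵢ²]`, the variance
`Γ = var(Gᵢ²)` and the autocorrelation parameters `p, k` with
`cor(Gᵢ², Gᵢ₊ₕ²) = k e^{−Δhp}` of the squared stationary returns sampled at spacing `Δ`,
for a driving Lévy process with fourth moment `S`. -/
noncomputable def gjrMomMap (Δ S : ℝ) (v : ℝ × ℝ × ℝ × ℝ) : ℝ × ℝ × ℝ × ℝ :=
  let θ := v.1; let η := v.2.1; let φ := v.2.2.1; let γ := v.2.2.2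
  let γt := 1 + γ ^ 2
  let H := γt ^ 2 + 4 * γt - 4
  let p := η - φ * γt
  let q := 2 * p - φ ^ 2 * H * S
  let μ := θ * Δ / p
  let Γ := 6 * (θ ^ 2 / p ^ 2) * (2 * η / φ - γt) * (2 / q - 1 / p)
        * (Δ - (1 - Real.exp (-Δ * p)) / p)
      + 2 * (θ ^ 2 / φ ^ 2) * (2 / q - 1 / p) * H⁻¹ * Δ
      + 2 * (θ ^ 2 / p ^ 2) * Δ ^ 2
  let k := (θ ^ 2 / (Γ * p ^ 3)) * (2 * η / φ - γt) * (2 / q - 1 / p)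
      * ((1 - Real.exp (-Δ * p)) * (Real.exp (Δ * p) - 1))
  (μ, Γ, p, k)

/-- The admissible parameter set of Theorem 5: `θ, η, φ > 0`, `γ ∈ [0,1)`,
`p = η − φ(1+γ²) > 0` (i.e. `Ψ(1) < 0`) and `q = 2p − φ²(1+6γ²+γ⁴)S > 0`
(i.e. `Ψ(2) < 0`). -/
def gjrAdmissible (S : ℝ) (v : ℝ × ℝ × ℝ × ℝ) : Prop :=
  0 < v.1 ∧ 0 < v.2.1 ∧ 0 < v.2.2.1 ∧ 0 ≤ v.2.2.2 ∧ v.2.2.2 < 1 ∧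
  0 < v.2.1 - v.2.2.1 * (1 + v.2.2.2 ^ 2) ∧
  0 < 2 * (v.2.1 - v.2.2.1 * (1 + v.2.2.2 ^ 2))
      - v.2.2.1 ^ 2 * (1 + 6 * v.2.2.2 ^ 2 + v.2.2.2 ^ 4) * S

/-! In the coordinates `γ̃ = 1 + γ²`, `H = γ̃² + 4γ̃ − 4`, `p = η − φγ̃`, `q = 2p − φ²HS` one has
`kΓ = KE` with `K = θ²S(2p + φγ̃)φH/(p⁴q)` and `Γ = 6K(pΔ − 1 + e^{−Δp}) + 2θ²SΔ/(pq) + 2μ²`.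
Hence the moments give `p`, `θ = pμ/Δ`, `q` (through `M₁ = 2θ²SΔ/(pq)`) and `K`, that is
`C = φ²H` and `(2p + φγ̃)φH = 2p√(CH) + γ̃C`. The latter is strictly increasing in `γ̃`, which
pins down `γ̃`, then `φ` and `η`. The radicand in the formula for `φ` is `(p/γ̃ + φ)²`. -/

open Real

lemma sub_one_add_exp_neg_pos {x : ℝ} (hx : 0 < x) : 0 < x - 1 + exp (-x) := by
  linarith [add_one_lt_exp (neg_ne_zero.2 hx.ne')]

lemma one_sub_exp_neg_mul_exp_sub_one_pos {x : ℝ} (hx : 0 < x) :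
    0 < (1 - exp (-x)) * (exp x - 1) :=
  mul_pos (sub_pos.2 (exp_lt_one_iff.2 (neg_neg_of_pos hx))) (sub_pos.2 (one_lt_exp_iff.2 hx))

section Reduced

variable {Δ S θ η φ t H p q : ℝ}

lemma gjr_factor_eq (hφ : φ ≠ 0) (hp : p ≠ 0) (hq : q ≠ 0) (hη : η = p + φ * t)
    (hqp : 2 * p - q = φ ^ 2 * H * S) :
    (2 * η / φ - t) * (2 / q - 1 / p) = S * ((2 * p + φ * t) * (φ * H)) / (p * q) := by
  have : 2 / q - 1 / p = (2 * p - q) / (p * q) := by field_simp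
  rw [this, hqp, hη]
  field_simp
  ring

lemma gjr_variance_eq (hφ : φ ≠ 0) (hp : p ≠ 0) (hq : q ≠ 0) (hH : H ≠ 0)
    (hη : η = p + φ * t) (hqp : 2 * p - q = φ ^ 2 * H * S) :
    6 * (θ ^ 2 / p ^ 2) * (2 * η / φ - t) * (2 / q - 1 / p) * (Δ - (1 - exp (-Δ * p)) / p)
      + 2 * (θ ^ 2 / φ ^ 2) * (2 / q - 1 / p) * H⁻¹ * Δ + 2 * (θ ^ 2 / p ^ 2) * Δ ^ 2
      = 6 * (θ ^ 2 * S * ((2 * p + φ * t) * (φ * H)) / (p ^ 4 * q)) * (p * Δ - 1 + exp (-Δ * p))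
        + 2 * θ ^ 2 * S * Δ / (p * q) + 2 * (θ * Δ / p) ^ 2 := by
  have h : 2 / q - 1 / p = φ ^ 2 * H * S / (p * q) := by rw [← hqp]; field_simp
  rw [h, hη]
  field_simp
  ring

lemma gjr_autocorrelation_eq (hφ : φ ≠ 0) (hp : p ≠ 0) (hq : q ≠ 0) (hη : η = p + φ * t)
    (hqp : 2 * p - q = φ ^ 2 * H * S) (Γ E : ℝ) :
    θ ^ 2 / (Γ * p ^ 3) * (2 * η / φ - t) * (2 / q - 1 / p) * E
      = θ ^ 2 * S * ((2 * p + φ * t) * (φ * H)) / (p ^ 4 * q) * E / Γ := by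
  rw [mul_assoc (θ ^ 2 / (Γ * p ^ 3)), gjr_factor_eq hφ hp hq hη hqp]
  simp only [div_eq_mul_inv, mul_inv]
  ring

end Reduced

lemma gjr_H_pos (γ : ℝ) : 0 < (1 + γ ^ 2) ^ 2 + 4 * (1 + γ ^ 2) - 4 := by
  nlinarith [sq_nonneg γ]

section Admissible

variable {S θ η φ γ : ℝ}

lemma gjrAdmissible.q_pos (hv : gjrAdmissible S (θ, η, φ, γ)) :
    0 < 2 * (η - φ * (1 + γ ^ 2)) - φ ^ 2 * ((1 + γ ^ 2) ^ 2 + 4 * (1 + γ ^ 2) - 4) * S := by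
  have hH : (1 + γ ^ 2) ^ 2 + 4 * (1 + γ ^ 2) - 4 = 1 + 6 * γ ^ 2 + γ ^ 4 := by ring
  rw [hH]
  exact hv.2.2.2.2.2.2

theorem gjrMomMap_eq (Δ : ℝ) (hv : gjrAdmissible S (θ, η, φ, γ)) :
    let t := 1 + γ ^ 2
    let H := t ^ 2 + 4 * t - 4
    let p := η - φ * t
    let q := 2 * p - φ ^ 2 * H * S
    let μ := θ * Δ / p
    let K := θ ^ 2 * S * ((2 * p + φ * t) * (φ * H)) / (p ^ 4 * q)
    let Γ := 6 * K * (p * Δ - 1 + exp (-Δ * p)) + 2 * θ ^ 2 * S * Δ / (p * q) + 2 * μ ^ 2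
    gjrMomMap Δ S (θ, η, φ, γ)
      = (μ, Γ, p, K * ((1 - exp (-Δ * p)) * (exp (Δ * p) - 1)) / Γ) := by
  intro t H p q μ K Γ
  have hφ : φ ≠ 0 := hv.2.2.1.ne'
  have hp : p ≠ 0 := hv.2.2.2.2.2.1.ne'
  have hq : q ≠ 0 := hv.q_pos.ne'
  have hH : H ≠ 0 := (gjr_H_pos γ).ne'
  have hη : η = p + φ * t := by ring
  have hqp : 2 * p - q = φ ^ 2 * H * S := by ring
  have hΓ := gjr_variance_eq (Δ := Δ) (θ := θ) hφ hp hq hH hη hqp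
  refine Prod.ext rfl (Prod.ext hΓ (Prod.ext rfl ?_))
  exact (gjr_autocorrelation_eq hφ hp hq hη hqp _ _).trans (by rw [hΓ])

end Admissible

section Shape

variable {p φ φ' t t' : ℝ}

lemma gjr_shape_le (hp : 0 < p) (hφ : 0 < φ) (hφ' : 0 < φ') (ht' : 1 ≤ t')
    (hC : φ ^ 2 * (t ^ 2 + 4 * t - 4) = φ' ^ 2 * (t' ^ 2 + 4 * t' - 4))
    (hK : (2 * p + φ * t) * (φ * (t ^ 2 + 4 * t - 4))
      = (2 * p + φ' * t') * (φ' * (t' ^ 2 + 4 * t' - 4))) :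
    t ≤ t' := by
  by_contra! htt
  set H := t ^ 2 + 4 * t - 4
  set H' := t' ^ 2 + 4 * t' - 4
  have hH' : 0 < H' := by nlinarith
  have hHH : H' < H := by nlinarith
  have hH : 0 < H := hH'.trans hHH
  have hu : φ' * H' < φ * H := by
    refine lt_of_pow_lt_pow_left₀ 2 (by positivity) ?_
    calc (φ' * H') ^ 2 = φ ^ 2 * H * H' := by rw [hC]; ring
      _ < φ ^ 2 * H * H := by gcongr
      _ = (φ * H) ^ 2 := by ring
  nlinarith [mul_lt_mul_of_pos_left hu hp,
    mul_lt_mul_of_pos_left htt (by positivity : 0 < φ' ^ 2 * H')]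

/-- At fixed `C = φ²H`, `(2p + φt)φH = 2p√(CH) + tC` is strictly increasing in `t`. -/
lemma gjr_shape_unique (hp : 0 < p) (hφ : 0 < φ) (hφ' : 0 < φ') (ht : 1 ≤ t) (ht' : 1 ≤ t')
    (hC : φ ^ 2 * (t ^ 2 + 4 * t - 4) = φ' ^ 2 * (t' ^ 2 + 4 * t' - 4))
    (hK : (2 * p + φ * t) * (φ * (t ^ 2 + 4 * t - 4))
      = (2 * p + φ' * t') * (φ' * (t' ^ 2 + 4 * t' - 4))) :
    t = t' ∧ φ = φ' := by
  obtain rfl : t = t' :=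
    le_antisymm (gjr_shape_le hp hφ hφ' ht' hC hK) (gjr_shape_le hp hφ' hφ ht hC.symm hK.symm)
  refine ⟨rfl, (pow_left_inj₀ hφ.le hφ'.le two_ne_zero).1 ?_⟩
  exact mul_right_cancel₀ (by nlinarith) hC

end Shape

noncomputable def gjrM₁ (Δ : ℝ) (m : ℝ × ℝ × ℝ × ℝ) : ℝ :=
  m.2.1 - 6 * m.2.2.2 * m.2.1 / ((1 - exp (-Δ * m.2.2.1)) * (exp (Δ * m.2.2.1) - 1))
    * (m.2.2.1 * Δ - 1 + exp (-Δ * m.2.2.1)) - 2 * m.1 ^ 2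

section Identities

variable {Δ S θ η φ γ : ℝ}

theorem gjrMomMap_identities (hΔ : 0 < Δ) (hS : 0 < S) (hv : gjrAdmissible S (θ, η, φ, γ)) :
    let t := 1 + γ ^ 2
    let H := t ^ 2 + 4 * t - 4
    let p := η - φ * t
    let q := 2 * p - φ ^ 2 * H * S
    let E := (1 - exp (-Δ * p)) * (exp (Δ * p) - 1)
    let m := gjrMomMap Δ S (θ, η, φ, γ)
    m.1 = θ * Δ / p ∧ m.2.2.1 = p ∧ 0 < E ∧
      m.2.2.2 * m.2.1 = θ ^ 2 * S * ((2 * p + φ * t) * (φ * H)) / (p ^ 4 * q) * E ∧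
      gjrM₁ Δ m = 2 * θ ^ 2 * S * Δ / (p * q) := by
  intro t H p q E m
  have hθ : 0 < θ := hv.1
  have hφ : 0 < φ := hv.2.2.1
  have hp : 0 < p := hv.2.2.2.2.2.1
  have hq : 0 < q := hv.q_pos
  have hH : 0 < H := gjr_H_pos γ
  have hE : 0 < E := by
    simp only [E, neg_mul]
    exact one_sub_exp_neg_mul_exp_sub_one_pos (mul_pos hΔ hp)
  have hr : 0 < p * Δ - 1 + exp (-Δ * p) := by
    simpa only [neg_mul, mul_comm Δ] using sub_one_add_exp_neg_pos (mul_pos hΔ hp)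
  set K := θ ^ 2 * S * ((2 * p + φ * t) * (φ * H)) / (p ^ 4 * q)
  set Γ := 6 * K * (p * Δ - 1 + exp (-Δ * p)) + 2 * θ ^ 2 * S * Δ / (p * q) + 2 * (θ * Δ / p) ^ 2
    with hΓd
  have hΓ : 0 < Γ := by positivity
  have hm : m = (θ * Δ / p, Γ, p, K * E / Γ) := gjrMomMap_eq Δ hv
  refine ⟨by rw [hm], by rw [hm], hE, by rw [hm]; exact div_mul_cancel₀ _ hΓ.ne', ?_⟩
  have h6 : 6 * (K * E / Γ) * Γ / E = 6 * K := by field_simp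
  rw [hm, gjrM₁]
  dsimp only
  rw [h6, hΓd]
  ring

end Identities

theorem gjrMomMap_injOn {Δ S : ℝ} (hΔ : 0 < Δ) (hS : 0 < S) :
    Set.InjOn (gjrMomMap Δ S) {v | gjrAdmissible S v} := by
  rintro ⟨θ, η, φ, γ⟩ hv ⟨θ', η', φ', γ'⟩ hv' heq
  obtain ⟨hμ, hp, hE, hkΓ, hM⟩ := gjrMomMap_identities hΔ hS hv
  obtain ⟨hμ', hp', -, hkΓ', hM'⟩ := gjrMomMap_identities hΔ hS hv'
  rw [heq] at hμ hp hkΓ hM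
  have hpp := hp'.symm.trans hp
  have hθθ := hμ.symm.trans hμ'
  have hKK := hkΓ.symm.trans hkΓ'
  have hMM := hM.symm.trans hM'
  rw [hpp] at hθθ hKK hMM
  have hp0 : 0 < η - φ * (1 + γ ^ 2) := hv.2.2.2.2.2.1
  obtain rfl : θ = θ' := mul_right_cancel₀ hΔ.ne' ((div_left_inj' hp0.ne').1 hθθ)
  have hθ : 0 < θ := hv.1
  have hq := hv.q_pos
  have hq' := hv'.q_pos
  rw [hpp] at hq'
  have hqq := mul_left_cancel₀ hp0.ne' <| mul_left_cancel₀ (by positivity) <|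
    (div_eq_div_iff (by positivity) (by positivity)).1 hMM.symm
  rw [← hqq] at hKK
  have hK := mul_left_cancel₀ (by positivity) <|
    (div_left_inj' (by positivity)).1 (mul_right_cancel₀ hE.ne' hKK)
  have hC := mul_right_cancel₀ hS.ne' (sub_right_injective hqq)
  obtain ⟨ht, rfl⟩ := gjr_shape_unique hp0 hv.2.2.1 hv'.2.2.1
    (le_add_of_nonneg_right (sq_nonneg γ)) (le_add_of_nonneg_right (sq_nonneg γ')) hC hK
  obtain rfl : γ = γ' := (pow_left_inj₀ hv.2.2.2.1 hv'.2.2.2.1 two_ne_zero).1 (by linarith)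
  obtain rfl : η = η' := by linarith
  rfl

lemma gjr_φ_eq_of_moments {Δ S θ φ t H p q E k Γ M₁ : ℝ} (hΔ : Δ ≠ 0) (hS : S ≠ 0)
    (hθ : θ ≠ 0) (hH : H ≠ 0) (hq : q ≠ 0) (hE : E ≠ 0) (hφ : 0 ≤ φ) (ht : 0 < t) (hp : 0 < p)
    (hkΓ : k * Γ = θ ^ 2 * S * ((2 * p + φ * t) * (φ * H)) / (p ^ 4 * q) * E)
    (hM : M₁ = 2 * θ ^ 2 * S * Δ / (p * q)) :
    φ = -p / t + √(p ^ 2 / t ^ 2 + 2 * Δ * k * Γ * p ^ 3 / (t * M₁ * E * H)) := by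
  have hsq : p ^ 2 / t ^ 2 + 2 * Δ * k * Γ * p ^ 3 / (t * M₁ * E * H) = (p / t + φ) ^ 2 := by
    rw [mul_assoc (2 * Δ) k, hkΓ, hM]
    field_simp
    ring
  rw [hsq, Real.sqrt_sq (by positivity)]
  ring

/-- Deterministic core of Theorem 5 (method-of-moments identifiability of the
GJR-COGARCH): the map `(θ, η, φ, γ) ↦ (μ, Γ, p, k)` is injective on the admissible
parameter set; in particular, the parameters are uniquely recovered from `(μ, Γ, p, k)`
via `θ = pμ/Δ`, `γ = √(γ̃ − 1)`,
`φ = −p/γ̃ + √(p²/γ̃² + 2ΔkΓp³/(γ̃M₁E(γ̃² + 4γ̃ − 4)))` and `η = p + φγ̃`,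
where `γ̃ = 1 + γ²`, `E = (1 − e^{−Δp})(e^{Δp} − 1)` and
`M₁ = Γ − (6kΓ/E)(pΔ − 1 + e^{−Δp}) − 2μ²`. -/
theorem gjr_mom_identifiable (Δ S : ℝ) (hΔ : 0 < Δ) (hS : 0 < S) :
    Set.InjOn (gjrMomMap Δ S) {v : ℝ × ℝ × ℝ × ℝ | gjrAdmissible S v} ∧
    ∀ θ η φ γ : ℝ, gjrAdmissible S (θ, η, φ, γ) →
      let m := gjrMomMap Δ S (θ, η, φ, γ)
      let μ := m.1; let Γ := m.2.1; let p := m.2.2.1; let k := m.2.2.2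
      let E := (1 - Real.exp (-Δ * p)) * (Real.exp (Δ * p) - 1)
      let M₁ := Γ - (6 * k * Γ / E) * (p * Δ - 1 + Real.exp (-Δ * p)) - 2 * μ ^ 2
      let γt := 1 + γ ^ 2
      θ = p * μ / Δ ∧ γ = Real.sqrt (γt - 1) ∧
      φ = -p / γt + Real.sqrt (p ^ 2 / γt ^ 2
            + 2 * Δ * k * Γ * p ^ 3 / (γt * M₁ * E * (γt ^ 2 + 4 * γt - 4))) ∧
      η = p + φ * γt := by
  refine ⟨gjrMomMap_injOn hΔ hS, fun θ η φ γ hv => ?_⟩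
  obtain ⟨hμ, hp, hE, hkΓ, hM⟩ := gjrMomMap_identities hΔ hS hv
  have hp0 : 0 < η - φ * (1 + γ ^ 2) := hv.2.2.2.2.2.1
  refine ⟨?_, ?_, ?_, ?_⟩
  · rw [hμ, hp]
    field_simp
  · simp [Real.sqrt_sq hv.2.2.2.1]
  · exact gjr_φ_eq_of_moments hΔ.ne' hS.ne' hv.1.ne' (gjr_H_pos γ).ne' hv.q_pos.ne' hE.ne'
      hv.2.2.1.le (by positivity) hp0 hkΓ hM
  · rw [hp]
    ring
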